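/- arXiv:2111.01863 — 2 statements merged into one kernel-verified Lean document; each statement's English description precedes it below -/
import Mathlib

section
/- Let n ≥ 2, let j be a positive integer, and let x = ⟨d,k,m⟩ be a nonzero element of M_n such that j divides d. Set d' = d/j, k' = k + (j−1)·min(0,d'), and m' = m + (j−1)·max(0,d'). Then the integers d', k', m' satisfy 1 − min(0,d') ≤ k' ≤ m' ≤ n − max(0,d'), so that y = ⟨d',k',m'⟩ is a nonzero element of M_n, and y^j = x. -/
open Matrix

/-- The n×n matrix ⟨d,k,m⟩: entry (i,j) (rows/columns numbered 1..n, here i.val+1, j.val+1)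
equals 1 if k ≤ i ≤ m and j = i + d, and 0 otherwise. -/
def tripMat (n : ℕ) (d k m : ℤ) : Matrix (Fin n) (Fin n) ℕ :=
  Matrix.of fun i j =>
    if k ≤ (i.val : ℤ) + 1 ∧ (i.val : ℤ) + 1 ≤ m ∧ (j.val : ℤ) + 1 = (i.val : ℤ) + 1 + d
    then 1 else 0

/-- The monoid M_n, as a set of n×n matrices: the zero matrix together with all
matrices ⟨d,k,m⟩ with 1 - min(0,d) ≤ k ≤ m ≤ n - max(0,d). -/
def MSet (n : ℕ) : Set (Matrix (Fin n) (Fin n) ℕ) :=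
  {0} ∪ {x | ∃ d k m : ℤ,
    1 - min 0 d ≤ k ∧ k ≤ m ∧ m ≤ (n : ℤ) - max 0 d ∧ x = tripMat n d k m}

lemma tripMat_mul (n : ℕ) (d1 k1 m1 d2 k2 m2 : ℤ) (hk2 : 1 ≤ k2) (hm2 : m2 ≤ (n:ℤ)) :
    tripMat n d1 k1 m1 * tripMat n d2 k2 m2 =
      tripMat n (d1 + d2) (max k1 (k2 - d1)) (min m1 (m2 - d1)) := by
  ext i l
  simp only [tripMat, Matrix.mul_apply, Matrix.of_apply]
  by_cases hQ : max k1 (k2 - d1) ≤ (i.val:ℤ)+1 ∧ (i.val:ℤ)+1 ≤ min m1 (m2 - d1) ∧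
      (l.val:ℤ)+1 = (i.val:ℤ)+1+(d1+d2)
  · rw [if_pos hQ]
    obtain ⟨hA, hB, hC⟩ := hQ
    have hp1 : 0 ≤ (i.val:ℤ) + d1 := by omega
    have hp2 : ((i.val:ℤ) + d1).toNat < n := by omega
    have p0 : Fin n := ⟨((i.val:ℤ) + d1).toNat, hp2⟩
    rw [Finset.sum_eq_single (⟨((i.val:ℤ) + d1).toNat, hp2⟩ : Fin n)]
    · have hv : (((⟨((i.val:ℤ) + d1).toNat, hp2⟩ : Fin n).val : ℤ)) = (i.val:ℤ) + d1 := by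
        simp only [Fin.val_mk]; omega
      rw [if_pos ⟨by omega, by omega, by omega⟩, if_pos ⟨by omega, by omega, by omega⟩]
    · intro p _ hne
      rw [if_neg, Nat.zero_mul]
      intro ⟨ha, hb, hc⟩
      apply hne
      apply Fin.ext
      simp only [Fin.val_mk]
      omega
    · intro h; exact absurd (Finset.mem_univ _) h
  · rw [if_neg hQ]
    apply Finset.sum_eq_zero
    intro p _
    by_cases hP : k1 ≤ (i.val:ℤ)+1 ∧ (i.val:ℤ)+1 ≤ m1 ∧ (p.val:ℤ)+1 = (i.val:ℤ)+1+d1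
    · rw [if_pos hP, Nat.one_mul, if_neg]
      intro ⟨ha, hb, hc⟩
      exact hQ ⟨by omega, by omega, by omega⟩
    · rw [if_neg hP, Nat.zero_mul]

lemma tripMat_pow (n : ℕ) (d k m : ℤ) (h1 : 1 - min 0 d ≤ k) (h2 : k ≤ m)
    (h3 : m ≤ (n:ℤ) - max 0 d) (t : ℕ) (ht : 1 ≤ t) :
    tripMat n d k m ^ t =
      tripMat n (t * d) (k - ((t:ℤ)-1) * min 0 d) (m - ((t:ℤ)-1) * max 0 d) := by
  induction t with
  | zero => omega
  | succ s ih =>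
    rcases Nat.eq_or_lt_of_le ht with h | h
    · simp [← h]
    · have hs : 1 ≤ s := by omega
      have hmulle : ((s:ℤ)-1) * min 0 d ≤ 0 :=
        mul_nonpos_of_nonneg_of_nonpos (by push_cast; omega) (min_le_left 0 d)
      have hmaxge : 0 ≤ ((s:ℤ)-1) * max 0 d :=
        mul_nonneg (by push_cast; omega) (le_max_left 0 d)
      rw [pow_succ, ih hs, tripMat_mul n _ _ _ d k m (by omega) (by omega)]
      have e1 : ((s:ℤ)) * d + d = ((s+1 : ℕ) : ℤ) * d := by push_cast; ring
      have e2 : max (k - ((s:ℤ)-1) * min 0 d) (k - (s:ℤ) * d)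
          = k - (((s+1:ℕ):ℤ)-1) * min 0 d := by
        rcases le_or_gt d 0 with hd | hd
        · rw [min_eq_right hd, max_eq_right (by nlinarith)]
          push_cast; ring
        · rw [min_eq_left hd.le, max_eq_left (by nlinarith)]
          push_cast; ring
      have e3 : min (m - ((s:ℤ)-1) * max 0 d) (m - (s:ℤ) * d)
          = m - (((s+1:ℕ):ℤ)-1) * max 0 d := by
        rcases le_or_gt d 0 with hd | hd
        · rw [max_eq_left hd, min_eq_left (by nlinarith)]
          push_cast; ring
        · rw [max_eq_right hd.le, min_eq_right (by nlinarith)]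
          push_cast; ring
      rw [e1, e2, e3]

/-- if j ∣ d, then y = ⟨d/j, k+(j−1)min(0,d/j), m+(j−1)max(0,d/j)⟩ is a
nonzero element of M_n and y^j = ⟨d,k,m⟩. -/
theorem stmt_6 (n : ℕ) (hn : 2 ≤ n) (j : ℕ) (hj : 1 ≤ j) (d k m : ℤ)
    (h1 : 1 - min 0 d ≤ k) (h2 : k ≤ m) (h3 : m ≤ (n : ℤ) - max 0 d)
    (hdvd : (j : ℤ) ∣ d) :
    (1 - min 0 (d / (j : ℤ)) ≤ k + ((j : ℤ) - 1) * min 0 (d / (j : ℤ)) ∧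
     k + ((j : ℤ) - 1) * min 0 (d / (j : ℤ)) ≤ m + ((j : ℤ) - 1) * max 0 (d / (j : ℤ)) ∧
     m + ((j : ℤ) - 1) * max 0 (d / (j : ℤ)) ≤ (n : ℤ) - max 0 (d / (j : ℤ))) ∧
    tripMat n (d / (j : ℤ))
        (k + ((j : ℤ) - 1) * min 0 (d / (j : ℤ)))
        (m + ((j : ℤ) - 1) * max 0 (d / (j : ℤ))) ^ j = tripMat n d k m := by
  set e := d / (j:ℤ) with he
  have hd : d = (j:ℤ) * e := (Int.mul_ediv_cancel' hdvd).symm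
  have hj1 : (1:ℤ) ≤ (j:ℤ) := by exact_mod_cast hj
  have hmin : min 0 d = (j:ℤ) * min 0 e := by
    rcases le_or_gt e 0 with h | h
    · rw [min_eq_right h, min_eq_right (by nlinarith), hd]
    · rw [min_eq_left h.le, min_eq_left (by nlinarith)]; ring
  have hmax : max 0 d = (j:ℤ) * max 0 e := by
    rcases le_or_gt e 0 with h | h
    · rw [max_eq_left h, max_eq_left (by nlinarith)]; ring
    · rw [max_eq_right h.le, max_eq_right (by nlinarith), hd]
  have g1 : 1 - min 0 e ≤ k + ((j:ℤ) - 1) * min 0 e := by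
    rw [hmin] at h1; nlinarith
  have g2 : k + ((j:ℤ) - 1) * min 0 e ≤ m + ((j:ℤ) - 1) * max 0 e := by
    have := mul_le_mul_of_nonneg_left (min_le_max (a := (0:ℤ)) (b := e)) (by linarith : (0:ℤ) ≤ (j:ℤ)-1)
    linarith
  have g3 : m + ((j:ℤ) - 1) * max 0 e ≤ (n:ℤ) - max 0 e := by
    rw [hmax] at h3; nlinarith
  refine ⟨⟨g1, g2, g3⟩, ?_⟩
  rw [tripMat_pow n e _ _ g1 g2 g3 j hj, ← hd,
    show k + ((j:ℤ)-1) * min 0 e - ((j:ℤ)-1) * min 0 e = k by ring,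
    show m + ((j:ℤ)-1) * max 0 e - ((j:ℤ)-1) * max 0 e = m by ring]
end

section
/- Let n ≥ 2. The set of nilpotent elements of S_n = M_n \ {1} (i.e., elements x such that some matrix power x^j, j ≥ 1, equals the zero matrix) is finite of cardinality n³/3 − n/3 + 1. -/
open Matrix

lemma tripMat_apply (n : ℕ) (d k m : ℤ) (i j : Fin n) :
    tripMat n d k m i j =
    if k ≤ (i.val : ℤ) + 1 ∧ (i.val : ℤ) + 1 ≤ m ∧ (j.val : ℤ) + 1 = (i.val : ℤ) + 1 + d
    then 1 else 0 := rfl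

lemma tripMat_zero_of_big {n : ℕ} {d : ℤ} (k m : ℤ) (h : (n:ℤ) ≤ d ∨ d ≤ -(n:ℤ)) :
    tripMat n d k m = 0 := by
  ext i j
  rw [tripMat_apply]
  have hi := i.isLt
  have hj := j.isLt
  rw [if_neg]
  · rfl
  · rintro ⟨-, -, h3⟩
    omega

lemma tripMat_mul_s10 {n : ℕ} (d e k m k' m' : ℤ) (h1 : 1 ≤ k') (h2 : m' ≤ (n:ℤ)) :
    tripMat n d k m * tripMat n e k' m' =
    tripMat n (d + e) (max k (k' - d)) (min m (m' - d)) := by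
  ext i j
  rw [Matrix.mul_apply, tripMat_apply]
  have hi := i.isLt
  have hj := j.isLt
  by_cases hC : max k (k'-d) ≤ (i.val:ℤ)+1 ∧ (i.val:ℤ)+1 ≤ min m (m'-d) ∧
      (j.val:ℤ)+1 = (i.val:ℤ)+1+(d+e)
  · rw [if_pos hC]
    obtain ⟨hC1, hC2, hC3⟩ := hC
    have hl0 : ((i.val:ℤ) + d).toNat < n := by omega
    set l0 : Fin n := ⟨((i.val:ℤ) + d).toNat, hl0⟩ with hl0def
    have hval : (l0.val : ℤ) = (i.val:ℤ) + d := by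
      simp only [hl0def]
      omega
    rw [Finset.sum_eq_single l0]
    · rw [tripMat_apply, tripMat_apply, if_pos, if_pos]
      · refine ⟨by omega, by omega, by omega⟩
      · refine ⟨by omega, by omega, by omega⟩
    · intro l _ hne
      rw [tripMat_apply, tripMat_apply]
      rcases Classical.em (k ≤ (i.val:ℤ)+1 ∧ (i.val:ℤ)+1 ≤ m ∧ (l.val:ℤ)+1 = (i.val:ℤ)+1+d) with hc | hc
      · exfalso
        apply hne
        apply Fin.ext
        omega
      · rw [if_neg hc, Nat.zero_mul]
    · intro h; exact absurd (Finset.mem_univ l0) h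
  · rw [if_neg hC]
    apply Finset.sum_eq_zero
    intro l _
    rw [tripMat_apply, tripMat_apply]
    rcases Classical.em (k ≤ (i.val:ℤ)+1 ∧ (i.val:ℤ)+1 ≤ m ∧ (l.val:ℤ)+1 = (i.val:ℤ)+1+d) with hc | hc
    · rcases Classical.em (k' ≤ (l.val:ℤ)+1 ∧ (l.val:ℤ)+1 ≤ m' ∧ (j.val:ℤ)+1 = (l.val:ℤ)+1+e) with hc' | hc'
      · exfalso; apply hC; refine ⟨by omega, by omega, by omega⟩
      · rw [if_neg hc', Nat.mul_zero]
    · rw [if_neg hc, Nat.zero_mul]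

lemma tripMat_pow_s10 {n : ℕ} (d k m : ℤ) (hk : 1 ≤ k) (hm : m ≤ (n:ℤ)) :
    ∀ j : ℕ, ∃ K M : ℤ, (tripMat n d k m) ^ (j+1) = tripMat n (((j:ℤ)+1) * d) K M := by
  intro j
  induction j with
  | zero => exact ⟨k, m, by rw [pow_one]; norm_num⟩
  | succ j ih =>
    obtain ⟨K, M, hKM⟩ := ih
    refine ⟨max K (k - ((j:ℤ)+1)*d), min M (m - ((j:ℤ)+1)*d), ?_⟩
    rw [pow_succ, hKM, tripMat_mul_s10 _ _ _ _ _ _ hk hm]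
    push_cast
    ring_nf

lemma trip_nilpotent {n : ℕ} (d k m : ℤ) (hd : d ≠ 0) (hk : 1 ≤ k) (hm : m ≤ (n:ℤ))
    (hn : 1 ≤ n) : (tripMat n d k m) ^ n = 0 := by
  obtain ⟨K, M, hKM⟩ := tripMat_pow_s10 d k m hk hm (n-1)
  have hcast : ((n-1 : ℕ) : ℤ) + 1 = (n:ℤ) := by omega
  rw [show (tripMat n d k m)^n = (tripMat n d k m)^((n-1)+1) by rw [Nat.sub_add_cancel hn],
    hKM, hcast]
  apply tripMat_zero_of_big
  rcases lt_or_gt_of_ne hd with h | h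
  · right; nlinarith [Int.natCast_pos.mpr hn]
  · left; nlinarith [Int.natCast_pos.mpr hn]

lemma trip_idem_pow {n : ℕ} (k m : ℤ) (hk : 1 ≤ k) (hm : m ≤ (n:ℤ)) (j : ℕ) :
    (tripMat n 0 k m) ^ (j+1) = tripMat n 0 k m := by
  induction j with
  | zero => exact pow_one _
  | succ j ih =>
    rw [pow_succ, ih, tripMat_mul_s10 _ _ _ _ _ _ hk hm]
    norm_num

lemma trip_entry_one {n : ℕ} {d k m : ℤ} (h1 : 1 - min 0 d ≤ k) (h2 : m ≤ (n:ℤ) - max 0 d)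
    (t : ℤ) (ht1 : k ≤ t) (ht2 : t ≤ m) :
    ∃ i j : Fin n, (i.val : ℤ) = t - 1 ∧ (j.val : ℤ) = t - 1 + d ∧
      tripMat n d k m i j = 1 := by
  have hb : 1 ≤ t ∧ t ≤ (n:ℤ) ∧ 1 ≤ t + d ∧ t + d ≤ (n:ℤ) := by omega
  refine ⟨⟨(t-1).toNat, by omega⟩, ⟨(t-1+d).toNat, by omega⟩, by simp; omega, by simp; omega, ?_⟩
  rw [tripMat_apply, if_pos]
  refine ⟨by simp; omega, by simp; omega, by simp; omega⟩

lemma trip_ne_zero {n : ℕ} {d k m : ℤ} (h1 : 1 - min 0 d ≤ k) (hkm : k ≤ m)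
    (h2 : m ≤ (n:ℤ) - max 0 d) : tripMat n d k m ≠ 0 := by
  intro h
  obtain ⟨i, j, -, -, hij⟩ := trip_entry_one h1 h2 k le_rfl hkm
  rw [h] at hij
  simp at hij

lemma trip_le {n : ℕ} {d k m d' k' m' : ℤ} (h1 : 1 - min 0 d ≤ k) (h2 : m ≤ (n:ℤ) - max 0 d)
    (heq : tripMat n d k m = tripMat n d' k' m') (t : ℤ) (ht1 : k ≤ t) (ht2 : t ≤ m) :
    k' ≤ t ∧ t ≤ m' ∧ d = d' := by
  obtain ⟨i, j, hiv, hjv, hij⟩ := trip_entry_one h1 h2 t ht1 ht2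
  rw [heq, tripMat_apply] at hij
  by_cases hc : k' ≤ (i.val:ℤ)+1 ∧ (i.val:ℤ)+1 ≤ m' ∧ (j.val:ℤ)+1 = (i.val:ℤ)+1+d'
  · omega
  · rw [if_neg hc] at hij; exact absurd hij.symm one_ne_zero

noncomputable def Vfin (N : ℕ) : Finset (ℤ × ℤ) :=
  (Finset.Icc (1:ℤ) N ×ˢ Finset.Icc (1:ℤ) N).filter fun p => p.1 < p.2

noncomputable def Ufin (N : ℕ) : Finset (ℤ × ℤ × ℤ) :=
  (Finset.Icc (1:ℤ) N ×ˢ Finset.Icc (1:ℤ) N ×ˢ Finset.Icc (1:ℤ) N).filter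
    fun p => p.1 < p.2.1 ∧ p.2.1 < p.2.2

lemma mem_Vfin {N : ℕ} {p : ℤ × ℤ} :
    p ∈ Vfin N ↔ 1 ≤ p.1 ∧ p.1 < p.2 ∧ p.2 ≤ (N:ℤ) := by
  simp [Vfin, Finset.mem_filter, Finset.mem_product, Finset.mem_Icc]
  omega

lemma mem_Ufin {N : ℕ} {p : ℤ × ℤ × ℤ} :
    p ∈ Ufin N ↔ 1 ≤ p.1 ∧ p.1 < p.2.1 ∧ p.2.1 < p.2.2 ∧ p.2.2 ≤ (N:ℤ) := by
  simp [Ufin, Finset.mem_filter, Finset.mem_product, Finset.mem_Icc]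
  omega

lemma Vfin_card (N : ℕ) : (Vfin N).card = N.choose 2 := by
  induction N with
  | zero =>
    rw [show Vfin 0 = ∅ by ext p; simp [mem_Vfin]; omega]
    simp
  | succ N ih =>
    have hsplit : Vfin (N+1) = Vfin N ∪ (Finset.Icc (1:ℤ) N).image (fun a => (a, (N+1:ℤ))) := by
      ext p
      simp [mem_Vfin, Finset.mem_union, Finset.mem_image, Finset.mem_Icc, Prod.ext_iff]
      constructor
      · rintro ⟨h1, h2, h3⟩
        by_cases h : p.2 ≤ (N:ℤ)
        · exact Or.inl ⟨h1, h2, h⟩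
        · exact Or.inr (by omega)
      · rintro (⟨h1, h2, h3⟩ | h)
        · exact ⟨h1, h2, by omega⟩
        · omega
    rw [hsplit, Finset.card_union_of_disjoint, ih, Finset.card_image_of_injective,
      Int.card_Icc]
    · rw [Nat.choose_succ_succ' N 1, Nat.choose_one_right]
      norm_num
      omega
    · intro a b hab
      simpa [Prod.ext_iff] using hab
    · rw [Finset.disjoint_left]
      rintro p hp hq
      rw [mem_Vfin] at hp
      simp [Finset.mem_image, Prod.ext_iff] at hq
      obtain ⟨-, h2⟩ := hq
      omega

lemma Ufin_card (N : ℕ) : (Ufin N).card = N.choose 3 := by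
  induction N with
  | zero =>
    rw [show Ufin 0 = ∅ by ext p; simp [mem_Ufin]; omega]
    simp
  | succ N ih =>
    have hsplit : Ufin (N+1) = Ufin N ∪ (Vfin N).image (fun p => (p.1, p.2, (N+1:ℤ))) := by
      ext p
      simp [mem_Ufin, mem_Vfin, Finset.mem_union, Finset.mem_image, Prod.ext_iff]
      constructor
      · rintro ⟨h1, h2, h3, h4⟩
        by_cases h : p.2.2 ≤ (N:ℤ)
        · exact Or.inl ⟨h1, h2, h3, h⟩
        · exact Or.inr (by omega)
      · rintro (⟨h1, h2, h3, h4⟩ | h)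
        · exact ⟨h1, h2, h3, by omega⟩
        · omega
    rw [hsplit, Finset.card_union_of_disjoint, ih, Finset.card_image_of_injective, Vfin_card]
    · rw [Nat.choose_succ_succ' N 2]
      norm_num
      omega
    · intro a b hab
      simpa [Prod.ext_iff] using hab
    · rw [Finset.disjoint_left]
      rintro p hp hq
      rw [mem_Ufin] at hp
      simp [Finset.mem_image, Prod.ext_iff] at hq
      obtain ⟨-, h2⟩ := hq
      omega

noncomputable def Pfin (n : ℕ) : Finset (ℤ × ℤ × ℤ) :=
  (Finset.Icc (1-(n:ℤ)) n ×ˢ Finset.Icc (1:ℤ) n ×ˢ Finset.Icc (1:ℤ) n).filter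
    fun p => p.1 ≠ 0 ∧ 1 - min 0 p.1 ≤ p.2.1 ∧ p.2.1 ≤ p.2.2 ∧ p.2.2 ≤ (n:ℤ) - max 0 p.1

lemma mem_Pfin {n : ℕ} {p : ℤ × ℤ × ℤ} :
    p ∈ Pfin n ↔ p.1 ≠ 0 ∧ 1 - min 0 p.1 ≤ p.2.1 ∧ p.2.1 ≤ p.2.2 ∧
      p.2.2 ≤ (n:ℤ) - max 0 p.1 := by
  simp [Pfin, Finset.mem_filter, Finset.mem_product, Finset.mem_Icc]
  omega

lemma Pfin_card (n : ℕ) : (Pfin n).card = 2 * (n+1).choose 3 := by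
  have hP : Pfin n = (Pfin n).filter (fun p => 0 < p.1) ∪ (Pfin n).filter (fun p => p.1 < 0) := by
    ext p
    simp only [Finset.mem_union, Finset.mem_filter]
    constructor
    · intro hp
      have := (mem_Pfin.mp hp).1
      rcases lt_or_gt_of_ne this with h | h
      · exact Or.inr ⟨hp, h⟩
      · exact Or.inl ⟨hp, h⟩
    · rintro (⟨hp, -⟩ | ⟨hp, -⟩) <;> exact hp
  have hpos : ((Pfin n).filter (fun p => 0 < p.1)).card = (Ufin (n+1)).card := by
    refine Finset.card_bij' (fun p _ => (p.2.1, p.2.2+1, p.2.2+p.1+1))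
      (fun q _ => (q.2.2 - q.2.1, q.1, q.2.1 - 1)) ?_ ?_ ?_ ?_
    · intro p hp
      simp only [Finset.mem_filter, mem_Pfin] at hp
      rw [mem_Ufin]
      push_cast
      omega
    · intro q hq
      rw [mem_Ufin] at hq
      simp only [Finset.mem_filter, mem_Pfin]
      push_cast at hq
      refine ⟨⟨by omega, by omega, by omega, by omega⟩, by omega⟩
    · intro p hp
      obtain ⟨d, k, m⟩ := p
      simp only [Prod.mk.injEq]
      refine ⟨?_, ?_, ?_⟩ <;> first | trivial | ring
    · intro q hq
      obtain ⟨a, b, c⟩ := q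
      simp only [Prod.mk.injEq]
      refine ⟨?_, ?_, ?_⟩ <;> first | trivial | ring
  have hneg : ((Pfin n).filter (fun p => p.1 < 0)).card = (Ufin (n+1)).card := by
    refine Finset.card_bij' (fun p _ => (p.2.1 + p.1, p.2.1, p.2.2+1))
      (fun q _ => (q.1 - q.2.1, q.2.1, q.2.2 - 1)) ?_ ?_ ?_ ?_
    · intro p hp
      simp only [Finset.mem_filter, mem_Pfin] at hp
      rw [mem_Ufin]
      push_cast
      omega
    · intro q hq
      rw [mem_Ufin] at hq
      simp only [Finset.mem_filter, mem_Pfin]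
      push_cast at hq
      refine ⟨⟨by omega, by omega, by omega, by omega⟩, by omega⟩
    · intro p hp
      obtain ⟨d, k, m⟩ := p
      simp only [Prod.mk.injEq]
      refine ⟨?_, ?_, ?_⟩ <;> first | trivial | ring
    · intro q hq
      obtain ⟨a, b, c⟩ := q
      simp only [Prod.mk.injEq]
      refine ⟨?_, ?_, ?_⟩ <;> first | trivial | ring
  have hdisj : Disjoint ((Pfin n).filter (fun p => 0 < p.1)) ((Pfin n).filter (fun p => p.1 < 0)) := by
    rw [Finset.disjoint_left]
    rintro p hp hq
    simp only [Finset.mem_filter] at hp hq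
    omega
  rw [hP, Finset.card_union_of_disjoint hdisj, hpos, hneg, Ufin_card]
  omega

lemma choose3_arith (n : ℕ) : 6 * (n+1).choose 3 + n = n^3 := by
  induction n with
  | zero => decide
  | succ n ih =>
    have h2 : 2 * (n+1).choose 2 = (n+1) * n := by
      clear ih
      induction n with
      | zero => decide
      | succ n ih2 =>
        rw [Nat.choose_succ_succ' (n+1) 1, Nat.choose_one_right]
        have e1 : (n+1+1)*(n+1) = n*n + 3*n + 2 := by ring
        have e2 : (n+1)*n = n*n + n := by ring
        linarith [ih2, e1, e2]
    rw [Nat.choose_succ_succ (n+1) 2]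
    have hcube : (n+1)^3 = n^3 + (3*n^2 + 3*n + 1) := by ring
    have hsq : (n+1)*n = n^2 + n := by ring
    linarith [ih, h2, hcube, hsq]

/-- the set of nilpotents of S_n = M_n \ {1} has exactly n³/3 − n/3 + 1
elements, i.e. (n³ − n)/3 + 1. -/
theorem stmt_10 (n : ℕ) (hn : 2 ≤ n) :
    ({x ∈ MSet n \ {1} | ∃ j : ℕ, 1 ≤ j ∧ x ^ j = 0}).Finite ∧
    ({x ∈ MSet n \ {1} | ∃ j : ℕ, 1 ≤ j ∧ x ^ j = 0}).ncard = (n ^ 3 - n) / 3 + 1 := by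
  have hn1 : 1 ≤ n := by omega
  have hone : (1 : Matrix (Fin n) (Fin n) ℕ) ≠ 0 := by
    intro h
    have := congrFun (congrFun h ⟨0, by omega⟩) ⟨0, by omega⟩
    rw [Matrix.one_apply_eq] at this
    simp at this
  have hset : {x ∈ MSet n \ {1} | ∃ j : ℕ, 1 ≤ j ∧ x ^ j = 0}
      = insert (0 : Matrix (Fin n) (Fin n) ℕ)
        ((fun p : ℤ × ℤ × ℤ => tripMat n p.1 p.2.1 p.2.2) '' ↑(Pfin n)) := by
    ext x
    simp only [Set.mem_setOf_eq, Set.mem_insert_iff, Set.mem_image, Set.mem_diff,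
      Set.mem_singleton_iff, Finset.mem_coe]
    constructor
    · rintro ⟨⟨hmem, -⟩, j, hj, hxj⟩
      simp only [MSet, Set.mem_union, Set.mem_singleton_iff, Set.mem_setOf_eq] at hmem
      rcases hmem with h0 | ⟨d, k, m, h1, h2, h3, h4⟩
      · exact Or.inl h0
      · by_cases hd : d = 0
        · subst hd
          exfalso
          apply trip_ne_zero h1 h2 h3
          rw [← h4]
          rw [h4, show j = (j-1)+1 by omega,
            trip_idem_pow k m (by omega) (by omega)] at hxj
          rw [h4, hxj]
        · exact Or.inr ⟨(d, k, m), mem_Pfin.mpr ⟨hd, h1, h2, h3⟩, h4.symm⟩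
    · rintro (rfl | ⟨p, hp, rfl⟩)
      · refine ⟨⟨Or.inl rfl, fun h => hone h.symm⟩, 1, le_rfl, by rw [pow_one]⟩
      · rw [mem_Pfin] at hp
        obtain ⟨hd, h1, h2, h3⟩ := hp
        have hnil : tripMat n p.1 p.2.1 p.2.2 ^ n = 0 :=
          trip_nilpotent _ _ _ hd (by omega) (by omega) hn1
        refine ⟨⟨Or.inr ⟨p.1, p.2.1, p.2.2, h1, h2, h3, rfl⟩, ?_⟩, n, hn1, hnil⟩
        intro h1x
        rw [h1x, one_pow] at hnil
        exact hone hnil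
  have hfin : ((fun p : ℤ × ℤ × ℤ => tripMat n p.1 p.2.1 p.2.2) '' ↑(Pfin n)).Finite :=
    (Pfin n).finite_toSet.image _
  have h0 : (0 : Matrix (Fin n) (Fin n) ℕ)
      ∉ (fun p : ℤ × ℤ × ℤ => tripMat n p.1 p.2.1 p.2.2) '' ↑(Pfin n) := by
    rintro ⟨p, hp, hp0⟩
    rw [Finset.mem_coe, mem_Pfin] at hp
    exact trip_ne_zero hp.2.1 hp.2.2.1 hp.2.2.2 hp0
  have hinj : Set.InjOn (fun p : ℤ × ℤ × ℤ => tripMat n p.1 p.2.1 p.2.2) ↑(Pfin n) := by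
    rintro ⟨d, k, m⟩ hp ⟨d', k', m'⟩ hq hpq
    rw [Finset.mem_coe, mem_Pfin] at hp hq
    obtain ⟨hd, h1, h2, h3⟩ := hp
    obtain ⟨hd', h1', h2', h3'⟩ := hq
    simp only at hpq
    have A1 := trip_le h1 h3 hpq k le_rfl h2
    have A2 := trip_le h1 h3 hpq m h2 le_rfl
    have B1 := trip_le h1' h3' hpq.symm k' le_rfl h2'
    have B2 := trip_le h1' h3' hpq.symm m' h2' le_rfl
    simp only [Prod.mk.injEq]
    omega
  rw [hset]
  constructor
  · exact hfin.insert 0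
  · rw [Set.ncard_insert_of_notMem h0 hfin, Set.ncard_image_of_injOn hinj,
      Set.ncard_coe_finset, Pfin_card]
    have h3 := choose3_arith n
    generalize hX : n ^ 3 = X at h3 ⊢
    omega
end
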